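/- Let (X, T) and (Y, S) be topological dynamical systems and f ∈ C(X × Y). If (X, T) has the specification property, then δ(f) ≥ γ(f). -/

import Mathlib

open MeasureTheory Filter Topology
open scoped ENNReal NNReal

noncomputable section

/-- Birkhoff average `A_k f(x, y) = (1/k) Σ_{j<k} f(T^j x, S^j y)`. -/
def birk2 {X Y : Type*} (T : X → X) (S : Y → Y) (f : X × Y → ℝ) (k : ℕ) (x : X) (y : Y) : ℝ :=
  (k : ℝ)⁻¹ * ∑ j ∈ Finset.range k, f ((Prod.map T S)^[j] (x, y))

/-- The set of invariant Borel probability measures of a map. -/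
def invMeas {Z : Type*} [MeasurableSpace Z] (U : Z → Z) : Set (ProbabilityMeasure Z) :=
  {μ | μ.toMeasure.map U = μ.toMeasure}

/-- `ψ_f(ν) = min { ∫ f dλ : λ ∈ M_{T×S}(X × Y), (π_Y)_* λ = ν }`. -/
def psi2 {X Y : Type*} [MeasurableSpace X] [MeasurableSpace Y]
    (T : X → X) (S : Y → Y) (f : X × Y → ℝ) (ν : ProbabilityMeasure Y) : ℝ :=
  sInf {r | ∃ lam ∈ invMeas (Prod.map T S), lam.toMeasure.map Prod.snd = ν.toMeasure ∧
    r = ∫ p, f p ∂lam.toMeasure}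

/-- `α(f) = sup_{ν ∈ M_S(Y)} ψ_f(ν)`. -/
def alpha2 {X Y : Type*} [MeasurableSpace X] [MeasurableSpace Y]
    (T : X → X) (S : Y → Y) (f : X × Y → ℝ) : ℝ :=
  sSup {r | ∃ ν ∈ invMeas S, r = psi2 T S f ν}

/-- `R_f`: points `(x, y)` whose Birkhoff averages converge. -/
def reg2 {X Y : Type*} (T : X → X) (S : Y → Y) (f : X × Y → ℝ) : Set (X × Y) :=
  {p | ∃ L : ℝ, Tendsto (fun k : ℕ => birk2 T S f k p.1 p.2) atTop (𝓝 L)}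

/-- `β(f) = sup_{y ∈ π_Y(R_f)} inf_{(x,y) ∈ R_f} lim_k A_k f(x, y)`. -/
def beta2 {X Y : Type*} (T : X → X) (S : Y → Y) (f : X × Y → ℝ) : ℝ :=
  sSup {r | ∃ y : Y, (∃ x : X, (x, y) ∈ reg2 T S f) ∧
    r = sInf {L | ∃ x : X, (x, y) ∈ reg2 T S f ∧
      Tendsto (fun k : ℕ => birk2 T S f k x y) atTop (𝓝 L)}}

/-- `γ(f) = sup_{y ∈ Y} inf_{x ∈ X} limsup_k A_k f(x, y)`. -/
def gamma2 {X Y : Type*} (T : X → X) (S : Y → Y) (f : X × Y → ℝ) : ℝ :=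
  ⨆ y : Y, ⨅ x : X, limsup (fun k : ℕ => birk2 T S f k x y) atTop

/-- `δ(f) = limsup_k max_{y ∈ Y} min_{x ∈ X} A_k f(x, y)`. -/
def delta2 {X Y : Type*} (T : X → X) (S : Y → Y) (f : X × Y → ℝ) : ℝ :=
  limsup (fun k : ℕ => ⨆ y : Y, ⨅ x : X, birk2 T S f k x y) atTop

/-- The invariant probability measures supported on a single closed (periodic) orbit. -/
def Mco {Z : Type*} [MeasurableSpace Z] (U : Z → Z) : Set (ProbabilityMeasure Z) :=
  {μ | ∃ (k : ℕ) (z : Z), 0 < k ∧ U^[k] z = z ∧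
    μ.toMeasure = (k : ℝ≥0∞)⁻¹ • ∑ j ∈ Finset.range k, Measure.dirac (U^[j] z)}

/-- `α_per(f)`: as `α(f)`, but with both measures ranging over closed-orbit measures. -/
def alphaPer2 {X Y : Type*} [MeasurableSpace X] [MeasurableSpace Y]
    (T : X → X) (S : Y → Y) (f : X × Y → ℝ) : ℝ :=
  sSup {r | ∃ ν ∈ Mco S,
    r = sInf {t | ∃ lam ∈ Mco (Prod.map T S), lam.toMeasure.map Prod.snd = ν.toMeasure ∧
      t = ∫ p, f p ∂lam.toMeasure}}

/-- The set of periodic points. -/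
def perPts {Z : Type*} (U : Z → Z) : Set Z :=
  {z | ∃ t : ℕ, 0 < t ∧ U^[t] z = z}

/-- `δ_per(f) = limsup_k sup_{y ∈ Per_S(Y)} inf_{x ∈ Per_T(X)} A_k f(x, y)`. -/
def deltaPer2 {X Y : Type*} (T : X → X) (S : Y → Y) (f : X × Y → ℝ) : ℝ :=
  limsup (fun k : ℕ => sSup {r | ∃ y ∈ perPts S,
    r = sInf {t | ∃ x ∈ perPts T, t = birk2 T S f k x y}}) atTop

/-- The `j`-th power (`j : ℤ`) of a homeomorphism, applied to a point. -/
def zit {X : Type*} [TopologicalSpace X] (T : X ≃ₜ X) (j : ℤ) (x : X) : X :=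
  (T.toEquiv ^ j) x

/-- The specification property for `(X, T)` (with respect to the metric of `X`):
for every `η > 0` there is `D = D(η)` such that every `D`-spaced specification
`ξ = (x_i, [a_i, b_i])_{i=1}^n` admits an `η`-tracing point. -/
def SpecProp {X : Type*} [MetricSpace X] (T : X ≃ₜ X) : Prop :=
  ∀ η : ℝ, 0 < η → ∃ D : ℕ, 0 < D ∧
    ∀ (n : ℕ) (x : Fin (n + 1) → X) (a b : Fin (n + 1) → ℤ),
      (∀ i, a i ≤ b i) →
      (∀ i : Fin n, (D : ℤ) ≤ a i.succ - b i.castSucc) →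
      ∃ x' : X, ∀ i : Fin (n + 1), ∀ j : ℤ, a i ≤ j → j ≤ b i →
        dist (zit T j x') (zit T j (x i)) < η

/-- The periodic specification property for `(X, T)`: as `SpecProp`, but the tracing
point can moreover be chosen of period `b_n - a_1 + D`. -/
def PerSpecProp {X : Type*} [MetricSpace X] (T : X ≃ₜ X) : Prop :=
  ∀ η : ℝ, 0 < η → ∃ D : ℕ, 0 < D ∧
    ∀ (n : ℕ) (x : Fin (n + 1) → X) (a b : Fin (n + 1) → ℤ),
      (∀ i, a i ≤ b i) →
      (∀ i : Fin n, (D : ℤ) ≤ a i.succ - b i.castSucc) →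
      ∃ x' : X, (∀ i : Fin (n + 1), ∀ j : ℤ, a i ≤ j → j ≤ b i →
          dist (zit T j x') (zit T j (x i)) < η) ∧
        zit T (b (Fin.last n) - a 0 + (D : ℤ)) x' = x'

/-
Fix `y` and `ε > 0`. For all large `k`, every point of `Y` admits an `x` whose `k`-step average
is below `δ(f) + ε`. Pick such an `x`-segment for each block `[iN, iN + k)` of the `S`-orbit of `y`,
where `N = k + D` and `D` is the specification gap for the modulus of uniform continuity of `f`,
and glue the first `n` of them into one `T`-orbit by specification; the gaps cost at most
`D ‖f‖`, negligible for large `k`. So the Birkhoff sums along the glued orbit at the times `mN`,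
`m ≤ n`, are at most `mN (δ(f) + 3ε)`. These are closed conditions, so by compactness a single
`x` satisfies them for all `m`, and then `limsup_k A_k f(x, y) ≤ δ(f) + 3ε`.
-/

section BirkhoffSum

variable {α : Type*} {φ : α → α} {g : α → ℝ} {C : ℝ}

theorem birkhoffSum_le_mul (hg : ∀ x, g x ≤ C) (n : ℕ) (x : α) :
    birkhoffSum φ g n x ≤ n * C := by
  simpa [birkhoffSum] using Finset.sum_le_card_nsmul (Finset.range n) _ C fun k _ => hg (φ^[k] x)

theorem abs_birkhoffAverage_le (hg : ∀ x, |g x| ≤ C) (n : ℕ) (x : α) :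
    |birkhoffAverage ℝ φ g n x| ≤ C := by
  rcases n.eq_zero_or_pos with rfl | hn
  · simpa using (abs_nonneg _).trans (hg x)
  rw [birkhoffAverage, smul_eq_mul, abs_mul, abs_inv, Nat.abs_cast, inv_mul_le_iff₀ (by positivity)]
  calc |birkhoffSum φ g n x| ≤ ∑ k ∈ Finset.range n, |g (φ^[k] x)| :=
        Finset.abs_sum_le_sum_abs _ _
    _ ≤ n * C := birkhoffSum_le_mul (g := fun x => |g x|) hg n x

theorem birkhoffSum_mul_le_of_forall_lt {N : ℕ} {b : ℝ} {x : α} (m : ℕ)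
    (h : ∀ i < m, birkhoffSum φ g N (φ^[i * N] x) ≤ b) :
    birkhoffSum φ g (m * N) x ≤ m * b := by
  induction m with
  | zero => simp
  | succ m ih =>
    rw [Nat.succ_mul, birkhoffSum_add, Nat.cast_succ, add_one_mul]
    exact add_le_add (ih fun i hi => h i (by omega)) (h m (by omega))

theorem birkhoffSum_le_of_birkhoffSum_mul_le {N : ℕ} (hN : 0 < N) {B : ℝ} {x : α}
    (hg : ∀ x, |g x| ≤ C) (h : ∀ m : ℕ, birkhoffSum φ g (m * N) x ≤ m * N * B) (n : ℕ) :
    birkhoffSum φ g n x ≤ n * B + N * (C + |B|) := by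
  have hn : n = n / N * N + n % N := (Nat.div_add_mod' n N).symm
  have hr : ((n % N : ℕ) : ℝ) ≤ N := by exact_mod_cast (Nat.mod_lt n hN).le
  have hC : 0 ≤ C + |B| := add_nonneg ((abs_nonneg _).trans (hg x)) (abs_nonneg B)
  have htail := birkhoffSum_le_mul (φ := φ) (fun y => (le_abs_self _).trans (hg y))
    (n % N) (φ^[n / N * N] x)
  rw [hn, birkhoffSum_add]
  push_cast
  nlinarith [h (n / N), neg_abs_le B, mul_le_mul_of_nonneg_right hr hC]

theorem limsup_birkhoffAverage_le_of_birkhoffSum_mul_le {N : ℕ} (hN : 0 < N) {B : ℝ} {x : α}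
    (hg : ∀ x, |g x| ≤ C) (h : ∀ m : ℕ, birkhoffSum φ g (m * N) x ≤ m * N * B) :
    limsup (fun n => birkhoffAverage ℝ φ g n x) atTop ≤ B := by
  have hlim : Tendsto (fun n : ℕ => B + N * (C + |B|) / n) atTop (𝓝 B) := by
    simpa using (tendsto_const_div_atTop_nhds_zero_nat (N * (C + |B|))).const_add B
  rw [← hlim.limsup_eq]
  refine limsup_le_limsup ?_
    (isCoboundedUnder_le_of_le atTop fun n => (abs_le.mp (abs_birkhoffAverage_le hg n x)).1)
    hlim.isBoundedUnder_le
  filter_upwards [eventually_gt_atTop 0] with n hn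
  rw [birkhoffAverage, smul_eq_mul, inv_mul_le_iff₀ (by positivity), mul_add,
    mul_div_cancel₀ _ (by positivity)]
  exact birkhoffSum_le_of_birkhoffSum_mul_le hN hg h n

end BirkhoffSum

theorem exists_forall_mem_of_forall_exists_forall_le_mem {X : Type*} [TopologicalSpace X]
    [CompactSpace X] {P : ℕ → Set X} (hP : ∀ m, IsClosed (P m))
    (h : ∀ n, ∃ x, ∀ m ≤ n, x ∈ P m) : ∃ x, ∀ m, x ∈ P m := by
  have hclosed : ∀ n, IsClosed (⋂ m ∈ Set.Iic n, P m) := fun n =>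
    isClosed_biInter fun m _ => hP m
  obtain ⟨x, hx⟩ := IsCompact.nonempty_iInter_of_sequence_nonempty_isCompact_isClosed
    (fun n => ⋂ m ∈ Set.Iic n, P m)
    (fun n => Set.biInter_subset_biInter_left (Set.Iic_subset_Iic.mpr n.le_succ))
    (fun n => by simpa using h n) (hclosed 0).isCompact hclosed
  simp only [Set.mem_iInter, Set.mem_Iic] at hx
  exact ⟨x, fun m => hx m m le_rfl⟩

theorem Continuous.exists_pos_forall_dist_lt_le_add {X Y : Type*} [PseudoMetricSpace X]
    [CompactSpace X] [PseudoMetricSpace Y] [CompactSpace Y] {f : X × Y → ℝ} (hf : Continuous f)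
    {ε : ℝ} (hε : 0 < ε) :
    ∃ η > 0, ∀ x₁ x₂ y, dist x₁ x₂ < η → f (x₁, y) ≤ f (x₂, y) + ε := by
  obtain ⟨η, hη, hfη⟩ := Metric.uniformContinuous_iff.mp
    (CompactSpace.uniformContinuous_of_continuous hf) ε hε
  refine ⟨η, hη, fun x₁ x₂ y h => ?_⟩
  have := hfη (a := (x₁, y)) (b := (x₂, y)) (by simpa [Prod.dist_eq, hη] using h)
  linarith [le_abs_self (f (x₁, y) - f (x₂, y)), Real.dist_eq (f (x₁, y)) (f (x₂, y))]

theorem zit_add {X : Type*} [TopologicalSpace X] (T : X ≃ₜ X) (p q : ℤ) (x : X) :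
    zit T p (zit T q x) = zit T (p + q) x := by
  simp [zit, zpow_add, Equiv.Perm.mul_apply]

theorem zit_natCast {X : Type*} [TopologicalSpace X] (T : X ≃ₜ X) (n : ℕ) (x : X) :
    zit T n x = T^[n] x := by
  rw [zit, zpow_natCast, ← Equiv.Perm.iterate_eq_pow]
  rfl

theorem SpecProp.exists_trace_blocks {X : Type*} [MetricSpace X] {T : X ≃ₜ X}
    (hT : SpecProp T) {η : ℝ} (hη : 0 < η) :
    ∃ D : ℕ, ∀ k : ℕ, 0 < k → ∀ (n : ℕ) (z : ℕ → X), ∃ x : X, ∀ i ≤ n, ∀ r < k,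
      dist (T^[i * (k + D) + r] x) (T^[r] (z i)) < η := by
  obtain ⟨D, -, hD⟩ := hT η hη
  refine ⟨D, fun k hk n z => ?_⟩
  set N := k + D
  obtain ⟨x, hx⟩ := hD n (fun i => zit T (-(i * N : ℕ)) (z i)) (fun i => (i * N : ℕ))
    (fun i => (i * N : ℕ) + k - 1) (fun i => by omega) (fun i => by
      simp only [Fin.val_succ, Fin.val_castSucc, N]
      push_cast
      linarith)
  refine ⟨x, fun i hi r hr => ?_⟩
  have := hx ⟨i, by omega⟩ (i * N + r : ℕ) (by simp) (by push_cast; omega)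
  rwa [zit_add, zit_natCast, show ((i * N + r : ℕ) : ℤ) + -(i * N : ℕ) = (r : ℕ) by push_cast; ring,
    zit_natCast] at this

section Birk2

variable {X Y : Type*} {T : X → X} {S : Y → Y} {f : X × Y → ℝ} {C : ℝ}

theorem birk2_eq_birkhoffAverage (k : ℕ) (x : X) (y : Y) :
    birk2 T S f k x y = birkhoffAverage ℝ (Prod.map T S) f k (x, y) :=
  rfl

theorem abs_birk2_le (hf : ∀ p, |f p| ≤ C) (k : ℕ) (x : X) (y : Y) :
    |birk2 T S f k x y| ≤ C :=
  abs_birkhoffAverage_le hf k (x, y)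

theorem bddBelow_range_limsup_birk2 (hf : ∀ p, |f p| ≤ C) (y : Y) :
    BddBelow (Set.range fun x => limsup (fun k => birk2 T S f k x y) atTop) :=
  ⟨-C, Set.forall_mem_range.mpr fun x => le_limsup_of_frequently_le
    (Frequently.of_forall fun k => (abs_le.mp (abs_birk2_le hf k x y)).1)
    (isBoundedUnder_of ⟨C, fun k => le_of_abs_le (abs_birk2_le hf k x y)⟩)⟩

theorem eventually_forall_exists_birk2_lt [Nonempty X] [Nonempty Y] (hf : ∀ p, |f p| ≤ C) {c : ℝ}
    (hc : delta2 T S f < c) : ∀ᶠ k in atTop, ∀ y, ∃ x, birk2 T S f k x y < c := by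
  have hbdd (k : ℕ) (y : Y) : BddBelow (Set.range fun x => birk2 T S f k x y) :=
    ⟨-C, Set.forall_mem_range.mpr fun x => (abs_le.mp (abs_birk2_le hf k x y)).1⟩
  have hinf_le (k : ℕ) (y : Y) : ⨅ x, birk2 T S f k x y ≤ C :=
    (ciInf_le (hbdd k y) (Classical.arbitrary X)).trans (le_of_abs_le (abs_birk2_le hf k _ y))
  have hbdd' (k : ℕ) : BddAbove (Set.range fun y => ⨅ x, birk2 T S f k x y) :=
    ⟨C, Set.forall_mem_range.mpr (hinf_le k)⟩
  have hM : IsBoundedUnder (· ≤ ·) atTop fun k => ⨆ y, ⨅ x, birk2 T S f k x y :=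
    isBoundedUnder_of ⟨C, fun k => ciSup_le (hinf_le k)⟩
  filter_upwards [eventually_lt_of_limsup_lt hc hM] with k hk y
  exact exists_lt_of_ciInf_lt ((le_ciSup (hbdd' k) y).trans_lt hk)

theorem birkhoffSum_le_of_forall_dist_iterate_lt [PseudoMetricSpace X] {η ε : ℝ}
    (hclose : ∀ x₁ x₂ y, dist x₁ x₂ < η → f (x₁, y) ≤ f (x₂, y) + ε) {k : ℕ} {x₁ x₂ : X}
    (h : ∀ r < k, dist (T^[r] x₁) (T^[r] x₂) < η) (y : Y) :
    birkhoffSum (Prod.map T S) f k (x₁, y) ≤ birkhoffSum (Prod.map T S) f k (x₂, y) + k * ε := by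
  simp only [birkhoffSum, Prod.map_iterate, Prod.map_apply]
  calc ∑ r ∈ Finset.range k, f (T^[r] x₁, S^[r] y)
      ≤ ∑ r ∈ Finset.range k, (f (T^[r] x₂, S^[r] y) + ε) :=
        Finset.sum_le_sum fun r hr => hclose _ _ _ (h r (Finset.mem_range.mp hr))
    _ = ∑ r ∈ Finset.range k, f (T^[r] x₂, S^[r] y) + k * ε := by
        rw [Finset.sum_add_distrib, Finset.sum_const, Finset.card_range, nsmul_eq_mul]

theorem birkhoffSum_add_le_of_shadow [PseudoMetricSpace X] {η ε c : ℝ}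
    (hf : ∀ p, |f p| ≤ C) (hclose : ∀ x₁ x₂ y, dist x₁ x₂ < η → f (x₁, y) ≤ f (x₂, y) + ε)
    {k : ℕ} (hk : 0 < k) (D : ℕ) {x z : X} {y : Y} (hz : birk2 T S f k z y < c)
    (h : ∀ r < k, dist (T^[r] x) (T^[r] z) < η) :
    birkhoffSum (Prod.map T S) f (k + D) (x, y) ≤ k * (c + ε) + D * C := by
  have hzk : birkhoffSum (Prod.map T S) f k (z, y) = k * birk2 T S f k z y := by
    rw [birk2_eq_birkhoffAverage, birkhoffAverage, smul_eq_mul, mul_inv_cancel_left₀ (by positivity)]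
  have hshadow := birkhoffSum_le_of_forall_dist_iterate_lt (S := S) hclose h y
  have hgap := birkhoffSum_le_mul (φ := Prod.map T S) (fun p => le_of_abs_le (hf p)) D
    ((Prod.map T S)^[k] (x, y))
  have hkc : (k : ℝ) * birk2 T S f k z y ≤ k * c := by gcongr
  rw [birkhoffSum_add]
  linarith

end Birk2

theorem SpecProp.exists_limsup_birk2_le {X Y : Type*} [MetricSpace X] [CompactSpace X]
    [Nonempty X] [MetricSpace Y] [CompactSpace Y] [Nonempty Y] {T : X ≃ₜ X} {S : Y → Y}
    {f : X × Y → ℝ} (hf : Continuous f) (hT : SpecProp T) (y : Y) {ε : ℝ} (hε : 0 < ε) :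
    ∃ x, limsup (fun k => birk2 T S f k x y) atTop ≤ delta2 T S f + 3 * ε := by
  set C := ‖(⟨f, hf⟩ : C(X × Y, ℝ))‖
  have hC : ∀ p, |f p| ≤ C := ContinuousMap.norm_coe_le_norm ⟨f, hf⟩
  obtain ⟨η, hη, hclose⟩ := hf.exists_pos_forall_dist_lt_le_add hε
  obtain ⟨D, htrace⟩ := hT.exists_trace_blocks hη
  obtain ⟨k, hk, hkD, hgood⟩ : ∃ k : ℕ, 0 < k ∧ 2 * D * C / ε ≤ k ∧
      ∀ y, ∃ x, birk2 T S f k x y < delta2 T S f + ε :=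
    ((eventually_gt_atTop 0).and <| (tendsto_natCast_atTop_atTop.eventually_ge_atTop _).and <|
      eventually_forall_exists_birk2_lt hC (lt_add_of_pos_right _ hε)).exists
  rw [div_le_iff₀ hε] at hkD
  set N := k + D
  set B := delta2 T S f + 3 * ε
  choose z hz using fun i => hgood (S^[i * N] y)
  have hblock (i : ℕ) {x : X} (hx : ∀ r < k, dist (T^[r] x) (T^[r] (z i)) < η) :
      birkhoffSum (Prod.map T S) f N (x, S^[i * N] y) ≤ N * B := by
    have hzC := (abs_le.mp (abs_birk2_le (T := T) (S := S) hC k (z i) (S^[i * N] y))).1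
    refine (birkhoffSum_add_le_of_shadow hC hclose hk D (hz i) hx).trans ?_
    -- the gap costs `D * C ≤ k * ε / 2`, and `-C ≤ δ(f) + ε` because `-C ≤ A_k f`
    push_cast [N, B]
    nlinarith [hz i]
  have hsum (n : ℕ) : ∃ x, ∀ m ≤ n, birkhoffSum (Prod.map T S) f (m * N) (x, y) ≤ m * N * B := by
    obtain ⟨x, hx⟩ := htrace k hk n z
    refine ⟨x, fun m hm => mul_assoc (m : ℝ) N B ▸ birkhoffSum_mul_le_of_forall_lt m fun i hi => ?_⟩
    rw [Prod.map_iterate, Prod.map_apply]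
    refine hblock i fun r hr => ?_
    rw [← Function.iterate_add_apply, add_comm]
    exact hx i (by omega) r hr
  have hclosed (m : ℕ) :
      IsClosed {x | birkhoffSum (Prod.map T S) f (m * N) (x, y) ≤ m * N * B} := by
    refine isClosed_le ?_ continuous_const
    simp only [birkhoffSum, Prod.map_iterate, Prod.map_apply]
    fun_prop
  obtain ⟨x, hx⟩ := exists_forall_mem_of_forall_exists_forall_le_mem hclosed hsum
  exact ⟨x, limsup_birkhoffAverage_le_of_birkhoffSum_mul_le (by omega) hC hx⟩

/-- if `(X, T)` has the specification property, then `δ(f) ≥ γ(f)`. -/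
theorem stmt16
    {X Y : Type*}
    [MetricSpace X] [CompactSpace X] [Nonempty X]
    [MetricSpace Y] [CompactSpace Y] [Nonempty Y]
    (T : X ≃ₜ X) (S : Y ≃ₜ Y) (f : X × Y → ℝ) (hf : Continuous f)
    (hspecX : SpecProp T) :
    gamma2 (⇑T) (⇑S) f ≤ delta2 (⇑T) (⇑S) f := by
  set C := ‖(⟨f, hf⟩ : C(X × Y, ℝ))‖
  have hC : ∀ p, |f p| ≤ C := ContinuousMap.norm_coe_le_norm ⟨f, hf⟩
  refine ciSup_le fun y => le_of_forall_pos_le_add fun ε hε => ?_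
  obtain ⟨x, hx⟩ := hspecX.exists_limsup_birk2_le (S := S) hf y (div_pos hε three_pos)
  calc ⨅ x, limsup (fun k => birk2 T S f k x y) atTop
      ≤ limsup (fun k => birk2 T S f k x y) atTop := ciInf_le (bddBelow_range_limsup_birk2 hC y) x
    _ ≤ delta2 T S f + ε := by linarith

end
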